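/- Let Γ = {(y,𝒜(y)) : y ∈ ℝ^n} ⊂ ℝ^d be a Lipschitz graph with Lip(𝒜) < 1, μ := ℋ^n_Γ. Fix x ∈ Γ, a cube R_j with ℓ(R_j) < 2^{−k+1} intersecting supp μ within its slight contraction, and let θ^j_k(x′) be the indicator that R_j meets the boundary of the annulus A(x′, 2^{−k−1}, 2^{−k}). Then ∫ θ^j_k dμ ≤ C ℓ(R_j) 2^{−k(n−1)}, with C depending only on n, d, and Lip(𝒜). -/

import Mathlib

/-!
Parametrize `Γ` by the `(1 + L)`-Lipschitz map `y ↦ (y, A y)`; it then suffices to bound the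
measure of the shells `{a < g ≤ b}` of `g y = ‖(y, A y) - u‖` in `ℝⁿ`, `u ∈ Γ`. Because
`L < 1`, moving `y` towards the foot point of `u` by the factor `t` shrinks `g` by at least the
factor `t + (1 - t) (1 + L) / 2 < 1`. Hence a homothety of ratio `t ≈ 1 - (b - a) / b` maps
`{g ≤ b}` into `{g ≤ a}`, and Bernoulli's inequality bounds the shell by
`(1 - tⁿ) |{g ≤ b}| ≲ (b - a) bⁿ⁻¹`. A point `x' ∈ Γ` whose sphere of radius `r` meets a cube of
side `l` near `u` lies in such a shell around `u` of width `≈ l` and radius `≈ r`, and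
`r ≤ 2⁻ᵏ`, `l < 2⁻ᵏ⁺¹`.
-/

open MeasureTheory Metric Set
open scoped NNReal ENNReal

/-- Projection onto the first `n` coordinates of `ℝ^{n+m}`. -/
noncomputable def piH (n m : ℕ) (x : EuclideanSpace ℝ (Fin (n + m))) :
    EuclideanSpace ℝ (Fin n) :=
  (WithLp.equiv 2 (Fin n → ℝ)).symm (fun i => x (Fin.castAdd m i))

/-- Projection onto the last `m` coordinates of `ℝ^{n+m}`. -/
noncomputable def piV (n m : ℕ) (x : EuclideanSpace ℝ (Fin (n + m))) :
    EuclideanSpace ℝ (Fin m) :=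
  (WithLp.equiv 2 (Fin m → ℝ)).symm (fun i => x (Fin.natAdd n i))

/-- The closed axis-parallel cube in `ℝ^{d'}` with center `c` and side length `l`. -/
def cube (d' : ℕ) (c : EuclideanSpace ℝ (Fin d')) (l : ℝ) : Set (EuclideanSpace ℝ (Fin d')) :=
  {y | ∀ i, |y i - c i| ≤ l / 2}

open Measure Module

theorem EuclideanSpace.dist_le_sqrt_card_mul {ι : Type*} [Fintype ι]
    {x y : EuclideanSpace ℝ ι} {r : ℝ} (hr : 0 ≤ r) (h : ∀ i, dist (x i) (y i) ≤ r) :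
    dist x y ≤ √(Fintype.card ι) * r := by
  rw [EuclideanSpace.dist_eq, ← Real.sqrt_sq hr, ← Real.sqrt_mul (by positivity)]
  gcongr
  calc ∑ i, dist (x i) (y i) ^ 2 ≤ ∑ _i : ι, r ^ 2 := by gcongr with i; exact h i
    _ = _ := by simp

theorem cube_mono {d : ℕ} {c : EuclideanSpace ℝ (Fin d)} {l l' : ℝ} (h : l ≤ l') :
    cube d c l ⊆ cube d c l' := fun _ hy i => (hy i).trans (by linarith)

theorem dist_le_of_mem_cube {d : ℕ} {c z u : EuclideanSpace ℝ (Fin d)} {l : ℝ} (hl : 0 ≤ l)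
    (hz : z ∈ cube d c l) (hu : u ∈ cube d c l) : dist z u ≤ √d * l := by
  have := EuclideanSpace.dist_le_sqrt_card_mul (x := z) (y := u) hl fun i => by
    rw [Real.dist_eq]
    linarith [abs_sub_le (z i) (c i) (u i), hz i, abs_sub_comm (u i) (c i) ▸ hu i]
  rwa [Fintype.card_fin] at this

theorem setOf_inter_sphere_nonempty_subset {X : Type*} [PseudoMetricSpace X] {s : Set X} {u : X}
    {D r : ℝ} (hs : s ⊆ closedBall u D) :
    {x | (s ∩ sphere x r).Nonempty} ⊆ {x | r - D ≤ dist x u ∧ dist x u ≤ r + D} := by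
  rintro x ⟨z, hz, hzx⟩
  have hzu : dist z u ≤ D := hs hz
  rw [mem_sphere] at hzx
  constructor <;> linarith [dist_triangle z u x, dist_triangle x z u, dist_comm x z, dist_comm u x]

section Shell

variable {E : Type*} [NormedAddCommGroup E] [NormedSpace ℝ E] [MeasurableSpace E] [BorelSpace E]
  [FiniteDimensional ℝ E] [Nontrivial E] (μ : Measure E) [μ.IsAddHaarMeasure]

theorem addHaar_sublevel_sdiff_le {g : E → ℝ} (hg : Measurable g) {y₀ : E} {s : ℝ}
    (hs₀ : 0 ≤ s) (hs₁ : s < 1) (hdist : ∀ y, dist y y₀ ≤ g y)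
    (hscale : ∀ y, ∀ t ∈ Icc (0 : ℝ) 1,
      g (AffineMap.homothety y₀ t y) ≤ (t + (1 - t) * s) * g y)
    {a b : ℝ} (hab : a ≤ b) (hb : 0 < b) :
    μ ({y | g y ≤ b} \ {y | g y ≤ a}) ≤ ENNReal.ofReal
      (finrank ℝ E * μ.real (closedBall 0 1) / (1 - s) * (b - a) * b ^ (finrank ℝ E - 1)) := by
  set d := finrank ℝ E
  set ω := μ.real (closedBall (0 : E) 1)
  have hd : (1 : ℝ) ≤ d := by exact_mod_cast finrank_pos
  have hpow : b ^ d = b * b ^ (d - 1) := by rw [← pow_succ', Nat.sub_add_cancel finrank_pos]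
  have hsub : {y | g y ≤ b} ⊆ closedBall y₀ b := fun y hy => (hdist y).trans hy
  have hfin : μ {y | g y ≤ b} ≠ ∞ := measure_ne_top_of_subset hsub measure_closedBall_lt_top.ne
  have hball : μ.real {y | g y ≤ b} ≤ ω * b ^ d := by
    calc μ.real {y | g y ≤ b} ≤ μ.real (closedBall y₀ b) :=
          measureReal_mono hsub measure_closedBall_lt_top.ne
      _ = ω * b ^ d := by rw [addHaar_real_closedBall' μ y₀ hb.le, mul_comm]
  rw [← ofReal_measureReal (measure_ne_top_of_subset sdiff_subset hfin)]
  apply ENNReal.ofReal_le_ofReal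
  rcases lt_or_ge a (s * b) with hsa | hsa
  · have hb' : b * (1 - s) ≤ b - a := by linarith
    calc μ.real ({y | g y ≤ b} \ {y | g y ≤ a}) ≤ μ.real {y | g y ≤ b} :=
          measureReal_mono sdiff_subset hfin
      _ ≤ ω * b ^ d := hball
      _ = b * (1 - s) * (ω * b ^ (d - 1) / (1 - s)) := by
          rw [hpow]; field_simp [(by linarith : (1 - s) ≠ 0)]
      _ ≤ (b - a) * (ω * b ^ (d - 1) / (1 - s)) := by gcongr
      _ ≤ d * (b - a) * (ω * b ^ (d - 1) / (1 - s)) := by gcongr; nlinarith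
      _ = _ := by ring
  · have hs : 1 - s ≠ 0 := by linarith
    have ha : 0 ≤ a := le_trans (by positivity) hsa
    set t := (a / b - s) / (1 - s) with ht
    have ht₀ : 0 ≤ t := div_nonneg (sub_nonneg.2 ((le_div_iff₀ hb).2 hsa)) (by linarith)
    have ht₁ : t ≤ 1 := by
      rw [div_le_one (by linarith)]; linarith [(div_le_one hb).2 hab]
    have hts : t + (1 - t) * s = a / b := by rw [ht]; field_simp; ring
    have hmaps : AffineMap.homothety y₀ t '' {y | g y ≤ b} ⊆ {y | g y ≤ a} := by
      rintro _ ⟨y, hy, rfl⟩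
      calc g (AffineMap.homothety y₀ t y) ≤ (t + (1 - t) * s) * g y := hscale y t ⟨ht₀, ht₁⟩
        _ ≤ a / b * b := by rw [hts]; exact mul_le_mul_of_nonneg_left hy (by positivity)
        _ = a := div_mul_cancel₀ a hb.ne'
    have hsa' : {y | g y ≤ a} ⊆ {y | g y ≤ b} := fun y hy => le_trans hy hab
    have himage : t ^ d * μ.real {y | g y ≤ b} ≤ μ.real {y | g y ≤ a} := by
      have := measureReal_mono hmaps (measure_ne_top_of_subset hsa' hfin)
      simpa [measureReal_def, abs_of_nonneg ht₀, pow_nonneg ht₀] using this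
    have hbern : 1 - t ^ d ≤ d * (1 - t) := by
      linarith [one_add_mul_sub_le_pow (by linarith : (-1 : ℝ) ≤ t) d]
    have h1t : (1 - t) * b = (b - a) / (1 - s) := by rw [ht]; field_simp; ring
    calc μ.real ({y | g y ≤ b} \ {y | g y ≤ a})
        = μ.real {y | g y ≤ b} - μ.real {y | g y ≤ a} :=
          measureReal_sdiff hsa' (measurableSet_le hg measurable_const) hfin
      _ ≤ (1 - t ^ d) * μ.real {y | g y ≤ b} := by linarith
      _ ≤ d * (1 - t) * (ω * b ^ d) := by gcongr
      _ = d * ((1 - t) * b) * (ω * b ^ (d - 1)) := by rw [hpow]; ring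
      _ = _ := by rw [h1t]; ring

end Shell

-- The sharp contraction factor is `√(t ^ 2 + (1 - t ^ 2) q)` with `q = 2 L ^ 2 / (1 + L ^ 2) < 1`;
-- `s = (1 + L) / 2` satisfies `q ≤ s ^ 2`, which gives the linear factor `t + (1 - t) s`.
theorem sq_add_sq_le_of_lipschitz_cone {L t σ G Gt : ℝ} (hL₀ : 0 ≤ L) (hL₁ : L ≤ 1)
    (ht₀ : 0 ≤ t) (ht₁ : t ≤ 1) (hσ : 0 ≤ σ) (hG₀ : 0 ≤ G) (hG : G ≤ L * σ) (hGt₀ : 0 ≤ Gt)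
    (hGt : Gt ≤ L * (t * σ)) (hGt' : Gt ≤ G + L * ((1 - t) * σ)) :
    (t * σ) ^ 2 + Gt ^ 2 ≤ (t + (1 - t) * ((1 + L) / 2)) ^ 2 * (σ ^ 2 + G ^ 2) := by
  set s := (1 + L) / 2 with hs_def
  have hs₀ : 0 ≤ s := by positivity
  have hs₁ : s ≤ 1 := by linarith
  have hGt_sq : Gt ^ 2 ≤ G ^ 2 + L ^ 2 * (1 - t ^ 2) * σ ^ 2 := by
    rcases le_total Gt G with h | h
    · nlinarith [mul_nonneg (mul_nonneg (sq_nonneg L) (by nlinarith : 0 ≤ 1 - t ^ 2)) (sq_nonneg σ)]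
    · have : (Gt - G) * (Gt + G) ≤ L * ((1 - t) * σ) * (L * (t * σ) + L * σ) :=
        mul_le_mul (by linarith) (by linarith) (by linarith) (by positivity)
      nlinarith
  have hs : 2 * L ^ 2 ≤ s ^ 2 * (1 + L ^ 2) := by
    have : s ^ 2 * (1 + L ^ 2) - 2 * L ^ 2 = (1 - L) ^ 2 * (L ^ 2 + 4 * L + 1) / 4 := by
      rw [hs_def]; ring
    nlinarith [this, (by positivity : 0 ≤ (1 - L) ^ 2 * (L ^ 2 + 4 * L + 1) / 4)]
  have hρ : t ^ 2 + (1 - t ^ 2) * s ^ 2 ≤ (t + (1 - t) * s) ^ 2 := by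
    nlinarith [mul_nonneg (mul_nonneg ht₀ (sub_nonneg.2 ht₁)) (mul_nonneg hs₀ (sub_nonneg.2 hs₁))]
  have hcone : G ^ 2 + L ^ 2 * σ ^ 2 ≤ s ^ 2 * (σ ^ 2 + G ^ 2) := by
    have : G ^ 2 ≤ L ^ 2 * σ ^ 2 := by nlinarith
    nlinarith [mul_le_mul_of_nonneg_right this (by nlinarith : 0 ≤ 1 - s ^ 2)]
  nlinarith [mul_le_mul_of_nonneg_right hρ (by positivity : 0 ≤ σ ^ 2 + G ^ 2),
    mul_le_mul_of_nonneg_left hcone (by nlinarith : 0 ≤ 1 - t ^ 2)]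

noncomputable def graphMap {n m : ℕ} (A : EuclideanSpace ℝ (Fin n) → EuclideanSpace ℝ (Fin m))
    (y : EuclideanSpace ℝ (Fin n)) : EuclideanSpace ℝ (Fin (n + m)) :=
  WithLp.toLp 2 (Fin.addCases (fun j => y j) (fun j => A y j))

def graphSet {n m : ℕ} (A : EuclideanSpace ℝ (Fin n) → EuclideanSpace ℝ (Fin m)) :
    Set (EuclideanSpace ℝ (Fin (n + m))) :=
  {x | piV n m x = A (piH n m x)}

section Graph

variable {n m : ℕ}

theorem continuous_piH : Continuous (piH n m) :=
  (PiLp.continuous_toLp 2 _).comp (continuous_pi fun _ => PiLp.continuous_apply 2 _ _)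

theorem continuous_piV : Continuous (piV n m) :=
  (PiLp.continuous_toLp 2 _).comp (continuous_pi fun _ => PiLp.continuous_apply 2 _ _)

theorem dist_sq_eq_piH_piV (x y : EuclideanSpace ℝ (Fin (n + m))) :
    dist x y ^ 2 = dist (piH n m x) (piH n m y) ^ 2 + dist (piV n m x) (piV n m y) ^ 2 := by
  simp only [EuclideanSpace.dist_eq]
  rw [Real.sq_sqrt (by positivity), Real.sq_sqrt (by positivity), Real.sq_sqrt (by positivity),
    Fin.sum_univ_add]
  rfl

variable {A : EuclideanSpace ℝ (Fin n) → EuclideanSpace ℝ (Fin m)} {L : ℝ≥0}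

@[simp] theorem piH_graphMap (y : EuclideanSpace ℝ (Fin n)) : piH n m (graphMap A y) = y := by
  ext j; simp [piH, graphMap]

@[simp] theorem piV_graphMap (y : EuclideanSpace ℝ (Fin n)) : piV n m (graphMap A y) = A y := by
  ext j; simp [piV, graphMap]

theorem graphMap_piH {x : EuclideanSpace ℝ (Fin (n + m))} (hx : x ∈ graphSet A) :
    graphMap A (piH n m x) = x := by
  ext i
  refine Fin.addCases (fun j => ?_) (fun j => ?_) i
  · simp [graphMap, piH]
  · simp [graphMap, ← hx.out, piV]

theorem isClosed_graphSet (hA : Continuous A) : IsClosed (graphSet A) :=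
  isClosed_eq continuous_piV (hA.comp continuous_piH)

theorem dist_graphMap_sq (y z : EuclideanSpace ℝ (Fin n)) :
    dist (graphMap A y) (graphMap A z) ^ 2 = dist y z ^ 2 + dist (A y) (A z) ^ 2 := by
  rw [dist_sq_eq_piH_piV, piH_graphMap, piH_graphMap, piV_graphMap, piV_graphMap]

theorem dist_le_dist_graphMap (y z : EuclideanSpace ℝ (Fin n)) :
    dist y z ≤ dist (graphMap A y) (graphMap A z) := by
  rw [← pow_le_pow_iff_left₀ dist_nonneg dist_nonneg two_ne_zero, dist_graphMap_sq]
  exact le_add_of_nonneg_right (sq_nonneg _)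

theorem LipschitzWith.graphMap (hA : LipschitzWith L A) :
    LipschitzWith (1 + L) (graphMap A) := by
  refine LipschitzWith.of_dist_le_mul fun y z => ?_
  rw [← pow_le_pow_iff_left₀ dist_nonneg (by positivity) two_ne_zero, dist_graphMap_sq]
  have := hA.dist_le_mul y z
  have : 0 ≤ dist (A y) (A z) := dist_nonneg
  push_cast
  nlinarith [dist_nonneg (x := y) (y := z), L.coe_nonneg]

theorem dist_graphMap_homothety_le (hA : LipschitzWith L A) (hL : L ≤ 1)
    (y₀ y : EuclideanSpace ℝ (Fin n)) {t : ℝ} (ht : t ∈ Icc (0 : ℝ) 1) :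
    dist (graphMap A (AffineMap.homothety y₀ t y)) (graphMap A y₀) ≤
      (t + (1 - t) * ((1 + L) / 2)) * dist (graphMap A y) (graphMap A y₀) := by
  set yt := AffineMap.homothety y₀ t y
  have hyt : dist yt y₀ = t * dist y y₀ := by
    rw [dist_homothety_center, Real.norm_of_nonneg ht.1, dist_comm]
  have hyty : dist yt y = (1 - t) * dist y y₀ := by
    rw [dist_homothety_self, Real.norm_of_nonneg (sub_nonneg.2 ht.2), dist_comm]
  have hGt : dist (A yt) (A y₀) ≤ L * (t * dist y y₀) := hyt ▸ hA.dist_le_mul yt y₀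
  have hGt' : dist (A yt) (A y₀) ≤ dist (A y) (A y₀) + L * ((1 - t) * dist y y₀) := by
    linarith [dist_triangle (A yt) (A y) (A y₀), hyty ▸ hA.dist_le_mul yt y]
  rw [← pow_le_pow_iff_left₀ dist_nonneg (mul_nonneg (add_nonneg ht.1
    (mul_nonneg (sub_nonneg.2 ht.2) (by positivity))) dist_nonneg) two_ne_zero, mul_pow,
    dist_graphMap_sq, dist_graphMap_sq, hyt]
  exact sq_add_sq_le_of_lipschitz_cone L.coe_nonneg (by exact_mod_cast hL) ht.1 ht.2 dist_nonneg
    dist_nonneg (hA.dist_le_mul y y₀) dist_nonneg hGt hGt'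

theorem hausdorffMeasure_graphSet_inter_annulus_le (hn : 1 ≤ n) (hA : LipschitzWith L A)
    (hL : L < 1) : ∃ C > (0 : ℝ), ∀ u ∈ graphSet A, ∀ a b : ℝ, a ≤ b → 0 < b →
      μH[n] (graphSet A ∩ {x | a < dist x u ∧ dist x u ≤ b}) ≤
        ENNReal.ofReal (C * (b - a) * b ^ (n - 1)) := by
  have : Nontrivial (EuclideanSpace ℝ (Fin n)) := by
    rw [← finrank_pos_iff (R := ℝ), finrank_euclideanSpace_fin]; exact hn
  set s : ℝ := (1 + L) / 2 with hs
  have hs₁ : s < 1 := by have : (L : ℝ) < 1 := hL; linarith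
  set ω := (μH[n] : Measure (EuclideanSpace ℝ (Fin n))).real (closedBall 0 1)
  have hω : 0 < ω := ENNReal.toReal_pos (measure_closedBall_pos _ 0 one_pos).ne'
    measure_closedBall_lt_top.ne
  refine ⟨(1 + L) ^ n * (n * ω / (1 - s)), by
    have : (0 : ℝ) < n := by exact_mod_cast hn
    have : 0 < 1 - s := by linarith
    positivity, fun u hu a b hab hb => ?_⟩
  set g := fun y => dist (graphMap A y) u
  have hgu : graphMap A (piH n m u) = u := graphMap_piH hu
  have hdist (y) : dist y (piH n m u) ≤ g y := by
    simpa only [g, hgu] using dist_le_dist_graphMap (A := A) y (piH n m u)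
  have hscale (y) (t) (ht : t ∈ Icc (0 : ℝ) 1) :
      g (AffineMap.homothety (piH n m u) t y) ≤ (t + (1 - t) * s) * g y := by
    simpa only [g, hgu] using dist_graphMap_homothety_le hA hL.le (piH n m u) y ht
  have hshell := addHaar_sublevel_sdiff_le (μH[n] : Measure (EuclideanSpace ℝ (Fin n)))
    (hA.graphMap.continuous.dist continuous_const).measurable (by positivity) hs₁ hdist hscale
    hab hb
  rw [finrank_euclideanSpace_fin] at hshell
  have hsub : graphSet A ∩ {x | a < dist x u ∧ dist x u ≤ b} ⊆
      graphMap A '' ({y | g y ≤ b} \ {y | g y ≤ a}) := by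
    rintro x ⟨hx, hxa, hxb⟩
    refine ⟨piH n m x, ?_, graphMap_piH hx⟩
    simp only [g, graphMap_piH hx, mem_sdiff, mem_ofPred_eq, not_le]
    exact ⟨hxb, hxa⟩
  calc μH[n] (graphSet A ∩ {x | a < dist x u ∧ dist x u ≤ b})
      ≤ μH[n] (graphMap A '' ({y | g y ≤ b} \ {y | g y ≤ a})) := measure_mono hsub
    _ ≤ ((1 + L : ℝ≥0) : ℝ≥0∞) ^ (n : ℝ) * μH[n] ({y | g y ≤ b} \ {y | g y ≤ a}) :=
        hA.graphMap.hausdorffMeasure_image_le (by positivity) _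
    _ ≤ ENNReal.ofReal ((1 + L) ^ n) *
          ENNReal.ofReal (n * ω / (1 - s) * (b - a) * b ^ (n - 1)) := by
        rw [ENNReal.rpow_natCast, ← ENNReal.coe_pow, ← ENNReal.ofReal_coe_nnreal]
        push_cast
        gcongr
    _ = ENNReal.ofReal ((1 + L) ^ n * (n * ω / (1 - s)) * (b - a) * b ^ (n - 1)) := by
        rw [← ENNReal.ofReal_mul (by positivity)]; ring_nf

theorem hausdorffMeasure_graphSet_inter_sphere_le (hn : 1 ≤ n) (hA : LipschitzWith L A)
    (hL : L < 1) : ∃ C > (0 : ℝ), ∀ u ∈ graphSet A, ∀ (s : Set (EuclideanSpace ℝ (Fin (n + m))))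
      (D r : ℝ), 0 < D → 0 < r → s ⊆ closedBall u D →
      μH[n] (graphSet A ∩ {x | (s ∩ sphere x r).Nonempty}) ≤
        ENNReal.ofReal (C * D * (r + D) ^ (n - 1)) := by
  obtain ⟨C, hC, hann⟩ := hausdorffMeasure_graphSet_inter_annulus_le hn hA hL
  refine ⟨3 * C, by positivity, fun u hu s D r hD hr hs => ?_⟩
  calc _ ≤ μH[n] (graphSet A ∩ {x | r - 2 * D < dist x u ∧ dist x u ≤ r + D}) := by
        refine measure_mono (inter_subset_inter_right _ fun x hx => ?_)
        have := setOf_inter_sphere_nonempty_subset hs hx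
        exact ⟨by linarith [this.1], this.2⟩
    _ ≤ ENNReal.ofReal (C * (r + D - (r - 2 * D)) * (r + D) ^ (n - 1)) :=
        hann u hu _ _ (by linarith) (by positivity)
    _ = ENNReal.ofReal (3 * C * D * (r + D) ^ (n - 1)) := by ring_nf

theorem hausdorffMeasure_graphSet_inter_cube_sphere_le (hn : 1 ≤ n) (hA : LipschitzWith L A)
    (hL : L < 1) : ∃ C > (0 : ℝ), ∀ (c : EuclideanSpace ℝ (Fin (n + m))) (l R : ℝ), 0 < l →
      l ≤ 2 * R → (∃ u ∈ graphSet A, u ∈ cube (n + m) c ((9 / 10) * l)) → ∀ r, 0 < r → r ≤ R →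
      μH[n] (graphSet A ∩ {x | (cube (n + m) c l ∩ sphere x r).Nonempty}) ≤
        ENNReal.ofReal (C * l * R ^ (n - 1)) := by
  obtain ⟨C, hC, hsph⟩ := hausdorffMeasure_graphSet_inter_sphere_le hn hA hL
  set κ : ℝ := √(n + m : ℕ)
  have hκ : 0 < κ := Real.sqrt_pos.2 (by norm_cast; omega)
  refine ⟨C * κ * (1 + 2 * κ) ^ (n - 1), by positivity, ?_⟩
  rintro c l R hl hlR ⟨u, hu, huc⟩ r hr hrR
  have hcube : cube (n + m) c l ⊆ closedBall u (κ * l) := fun z hz =>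
    dist_le_of_mem_cube hl.le hz (cube_mono (by linarith) huc)
  refine (hsph u hu _ _ r (by positivity) hr hcube).trans (ENNReal.ofReal_le_ofReal ?_)
  have hrD : r + κ * l ≤ (1 + 2 * κ) * R := by nlinarith
  calc C * (κ * l) * (r + κ * l) ^ (n - 1) ≤ C * (κ * l) * ((1 + 2 * κ) * R) ^ (n - 1) := by
        gcongr
    _ = _ := by rw [mul_pow]; ring

end Graph

theorem stmt15_general (n m : ℕ) (hn : 1 ≤ n)
    (A : EuclideanSpace ℝ (Fin n) → EuclideanSpace ℝ (Fin m)) (L : ℝ≥0) (hL : L < 1)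
    (hA : LipschitzWith L A) :
    ∃ C > (0 : ℝ), ∀ (k : ℤ) (c : EuclideanSpace ℝ (Fin (n + m))) (l : ℝ),
      0 < l → l < (2 : ℝ) ^ (-k + 1) →
      (∃ u, piV n m u = A (piH n m u) ∧ u ∈ cube (n + m) c ((9 / 10) * l)) →
      (μH[n]).restrict {x | piV n m x = A (piH n m x)}
          {x' | (cube (n + m) c l ∩
            (sphere x' ((2 : ℝ) ^ (-k - 1)) ∪ sphere x' ((2 : ℝ) ^ (-k)))).Nonempty}
        ≤ ENNReal.ofReal (C * l * (2 : ℝ) ^ (-k * ((n : ℤ) - 1))) := by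
  obtain ⟨C, hC, hbound⟩ := hausdorffMeasure_graphSet_inter_cube_sphere_le hn hA hL
  refine ⟨2 * C, by positivity, fun k c l hl hlk hu => ?_⟩
  set R : ℝ := 2 ^ (-k)
  have hlR : l ≤ 2 * R := by
    rw [zpow_add₀ two_ne_zero, zpow_one] at hlk; linarith
  have hpow : (2 : ℝ) ^ (-k * ((n : ℤ) - 1)) = R ^ (n - 1) := by
    rw [zpow_mul, ← zpow_natCast, Nat.cast_sub hn, Nat.cast_one]
  set S := fun r : ℝ => {x | (cube (n + m) c l ∩ sphere x r).Nonempty}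
  have hsplit : {x | (cube (n + m) c l ∩ (sphere x (2 ^ (-k - 1)) ∪ sphere x R)).Nonempty} ⊆
      S (2 ^ (-k - 1)) ∪ S R := fun x ⟨z, hz, hzx⟩ =>
    hzx.elim (fun h => Or.inl ⟨z, hz, h⟩) (fun h => Or.inr ⟨z, hz, h⟩)
  change (μH[n]).restrict (graphSet A) _ ≤ _
  rw [Measure.restrict_apply' (isClosed_graphSet hA.continuous).measurableSet, inter_comm, hpow]
  calc _ ≤ μH[n] (graphSet A ∩ S (2 ^ (-k - 1)) ∪ graphSet A ∩ S R) := by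
        rw [← inter_union_distrib_left]; exact measure_mono (inter_subset_inter_right _ hsplit)
    _ ≤ _ := measure_union_le _ _
    _ ≤ _ := add_le_add
        (hbound c l R hl hlR hu _ (by positivity) (zpow_le_zpow_right₀ one_le_two (by omega)))
        (hbound c l R hl hlR hu _ (by positivity) le_rfl)
    _ = _ := by rw [← ENNReal.ofReal_add (by positivity) (by positivity)]; ring_nf

/-- If `Γ` is a Lipschitz graph of slope `< 1` with `μ := ℋ^n_Γ`, `R_j`
is a cube of side `ℓ(R_j) < 2^{−k+1}` whose contraction `(9/10)R_j` meets `supp μ`, and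
`θ^j_k(x')` is the indicator that `R_j` meets `∂A(x', 2^{−k−1}, 2^{−k})` (the union of the
two bounding spheres), then `∫ θ^j_k dμ ≤ C ℓ(R_j) 2^{−k(n−1)}`, with `C` depending only
on `n`, `d`, `Lip(𝒜)`. -/
theorem stmt15 (n m : ℕ) (hn : 1 ≤ n) (hm : 1 ≤ m)
    (A : EuclideanSpace ℝ (Fin n) → EuclideanSpace ℝ (Fin m)) (L : ℝ≥0) (hL : L < 1)
    (hA : LipschitzWith L A) :
    ∃ C > (0 : ℝ), ∀ (k : ℤ) (c : EuclideanSpace ℝ (Fin (n + m))) (l : ℝ),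
      0 < l → l < (2 : ℝ) ^ (-k + 1) →
      (∃ u, piV n m u = A (piH n m u) ∧ u ∈ cube (n + m) c ((9 / 10) * l)) →
      (μH[n]).restrict {x | piV n m x = A (piH n m x)}
          {x' | (cube (n + m) c l ∩
            (sphere x' ((2 : ℝ) ^ (-k - 1)) ∪ sphere x' ((2 : ℝ) ^ (-k)))).Nonempty}
        ≤ ENNReal.ofReal (C * l * (2 : ℝ) ^ (-k * ((n : ℤ) - 1))) :=
  stmt15_general n m hn A L hL hA
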